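/- arXiv:0912.3269 — 6 statements merged into one kernel-verified Lean document; each statement's English description precedes it below -/
import Mathlib

section
/- Von Staudt–Clausen theorem: for every even positive integer n, the sum of the n-th Bernoulli number B_n and the sum of 1/p over all primes p such that (p-1) divides n is an integer. -/
theorem von_staudt_clausen_general (n : ℕ) (hne : Even n) :
    ∃ z : ℤ, bernoulli n +
      ∑ p ∈ (Finset.range (n + 2)).filter (fun p => p.Prime ∧ (p - 1) ∣ n),
        (1 : ℚ) / p = z := by
  obtain ⟨k, rfl⟩ := hne
  obtain ⟨z, hz⟩ := Bernoulli.vonStaudt_clausen k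
  exact ⟨z, by rw [← two_mul, ← hz]⟩

/-- Von Staudt–Clausen: for even positive `n`, `B_n + ∑_{(p-1) ∣ n, p prime} 1/p` is an integer. -/
theorem von_staudt_clausen (n : ℕ) (hn : 0 < n) (hne : Even n) :
    ∃ z : ℤ, bernoulli n +
      ∑ p ∈ (Finset.range (n + 2)).filter (fun p => p.Prime ∧ (p - 1) ∣ n),
        (1 : ℚ) / p = z :=
  von_staudt_clausen_general n hne
end

section
/- Von Staudt–Clausen corollary: for every even positive integer n, the denominator of B_n (in lowest terms) equals the product of all primes p such that (p-1) divides n. -/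
/-!
By von Staudt–Clausen (`Bernoulli.vonStaudt_clausen`), `B_n` differs from `-∑ 1/p`, over the
primes `p` with `(p - 1) ∣ n`, by an integer, so the two have the same denominator. The summands
have pairwise coprime denominators, and the denominator of such a sum is the product of theirs.
-/

open Finset

namespace Rat

theorem den_add_of_coprime {q r : ℚ} (h : q.den.Coprime r.den) :
    (q + r).den = q.den * r.den := by
  refine Nat.dvd_antisymm (add_den_dvd q r) (h.mul_dvd_of_dvd_of_dvd ?_ ?_)
  · have hq : q.den ∣ (q + r).den * r.den := by
      simpa [neg_den] using add_den_dvd (q + r) (-r)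
    exact h.dvd_of_dvd_mul_right hq
  · have hr : r.den ∣ (q + r).den * q.den := by
      simpa [neg_den] using add_den_dvd (q + r) (-q)
    exact h.symm.dvd_of_dvd_mul_right hr

theorem den_sum_of_pairwise_coprime {ι : Type*} [DecidableEq ι] {s : Finset ι} {f : ι → ℚ}
    (h : (s : Set ι).Pairwise fun i j => (f i).den.Coprime (f j).den) :
    (∑ i ∈ s, f i).den = ∏ i ∈ s, (f i).den := by
  induction s using Finset.induction_on with
  | empty => simp
  | insert a s ha ih =>
    have hs : (s : Set ι).Pairwise fun i j => (f i).den.Coprime (f j).den := h.mono (by simp)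
    have ha' : (f a).den.Coprime (∑ i ∈ s, f i).den := by
      rw [ih hs]
      exact Nat.Coprime.prod_right fun i hi =>
        h (by simp) (by simp [hi]) (ne_of_mem_of_not_mem hi ha).symm
    rw [sum_insert ha, prod_insert ha, den_add_of_coprime ha', ih hs]

end Rat

theorem den_sum_one_div_primes {s : Finset ℕ} (hs : ∀ p ∈ s, p.Prime) :
    (∑ p ∈ s, (1 : ℚ) / p).den = ∏ p ∈ s, p := by
  have hden : ∀ p ∈ s, ((1 : ℚ) / p).den = p := fun p hp => by simp [(hs p hp).ne_zero]
  rw [Rat.den_sum_of_pairwise_coprime, prod_congr rfl hden]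
  intro p hp q hq hpq
  rw [hden p hp, hden q hq]
  exact (Nat.coprime_primes (hs p hp) (hs q hq)).2 hpq

theorem von_staudt_clausen_den_general (n : ℕ) (hne : Even n) :
    (bernoulli n).den =
      ∏ p ∈ (Finset.range (n + 2)).filter (fun p => p.Prime ∧ (p - 1) ∣ n), p := by
  obtain ⟨k, rfl⟩ := hne
  rw [← two_mul]
  obtain ⟨z, hz⟩ := Bernoulli.vonStaudt_clausen k
  rw [eq_sub_of_add_eq hz.symm, Rat.intCast_sub_den]
  exact den_sum_one_div_primes fun p hp => (mem_filter.1 hp).2.1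

/-- Von Staudt–Clausen corollary: for even positive `n`, the denominator of `B_n`
equals the product of all primes `p` with `(p-1) ∣ n`. -/
theorem von_staudt_clausen_den (n : ℕ) (hn : 0 < n) (hne : Even n) :
    (bernoulli n).den =
      ∏ p ∈ (Finset.range (n + 2)).filter (fun p => p.Prime ∧ (p - 1) ∣ n), p :=
  von_staudt_clausen_den_general n hne
end

section
/- Let r be the real cube root of 23. Then e = 2166673601 + 761875860·r + 267901370·r² is a unit in the ring of integers of the cubic field ℚ(r). -/
open IntermediateField in
/-- With `r` the real cube root of 23 and `K = ℚ(r)`, the element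
`e = 2166673601 + 761875860 r + 267901370 r²` is a unit of the ring of integers of `K`:
it is an algebraic integer and has an algebraic-integer multiplicative inverse. -/
theorem voronoi_unit (r : ℝ) (hr : r ^ 3 = 23) (hrpos : 0 < r) :
    (2166673601 + 761875860 * AdjoinSimple.gen ℚ r +
        267901370 * AdjoinSimple.gen ℚ r ^ 2) ∈ integralClosure ℤ ℚ⟮r⟯ ∧
    ∃ v ∈ integralClosure ℤ ℚ⟮r⟯,
      (2166673601 + 761875860 * AdjoinSimple.gen ℚ r +
        267901370 * AdjoinSimple.gen ℚ r ^ 2) * v = 1 := by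
  set g := AdjoinSimple.gen ℚ r with hgdef
  have hg : g ^ 3 = 23 := by
    apply Subtype.ext
    push_cast
    exact hr
  have hgint : g ∈ integralClosure ℤ ℚ⟮r⟯ := by
    refine ⟨Polynomial.X ^ 3 - Polynomial.C 23, ?_, ?_⟩
    · exact Polynomial.monic_X_pow_sub_C _ (by norm_num)
    · simp [Polynomial.eval₂, hg]
  have hmem : ∀ (a b c : ℤ), ((a : ℚ⟮r⟯) + b * g + c * g ^ 2) ∈ integralClosure ℤ ℚ⟮r⟯ := by
    intro a b c
    refine Subalgebra.add_mem _ (Subalgebra.add_mem _ ?_ ?_) ?_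
    · exact Subalgebra.intCast_mem _ a
    · exact Subalgebra.mul_mem _ (Subalgebra.intCast_mem _ b) hgint
    · exact Subalgebra.mul_mem _ (Subalgebra.intCast_mem _ c)
        (Subalgebra.pow_mem _ hgint 2)
  constructor
  · have := hmem 2166673601 761875860 267901370
    push_cast at this
    convert this using 2
  · refine ⟨(-41399 : ℚ⟮r⟯) + (-3160) * g + 6230 * g ^ 2, ?_, ?_⟩
    · have := hmem (-41399) (-3160) 6230
      push_cast at this
      convert this using 2
    · linear_combination (1669025535100 * g + 3899918278600 : ℚ⟮r⟯) * hg
end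

section
/- Dirichlet's divisor estimate: Σ_{n ≤ x} d(n) = x log x + (2γ − 1)x + O(√x) as x → ∞. -/
/-!
Dirichlet's hyperbola method: counting the lattice points `(a, b)` with `ab ≤ x` by the columns
`a ≤ K` and the rows `b ≤ K`, where `K = ⌊√x⌋`, and subtracting the square counted twice gives
`∑_{n ≤ x} d(n) = 2 ∑_{a ≤ K} ⌊x/a⌋ - K²`. Replacing `⌊x/a⌋` by `x/a` costs `O(K)`,
`∑_{a ≤ K} 1/a = log √x + γ + O(1/K)` and `K² = x + O(√x)`, so every error is `O(√x)`.
-/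

open Finset Real

namespace Nat

lemma filter_Ioc_mul_le_eq_Ioc {a : ℕ} (ha : 0 < a) (m M N : ℕ) :
    {b ∈ Ioc m M | b * a ≤ N} = Ioc m (min M (N / a)) := by
  ext b
  simp only [mem_filter, mem_Ioc, le_min_iff, Nat.le_div_iff_mul_le ha]
  tauto

theorem sum_Ioc_div_add_sqrt_mul_sqrt (N : ℕ) :
    ∑ a ∈ Ioc 0 N, N / a + N.sqrt * N.sqrt = 2 * ∑ a ∈ Ioc 0 N.sqrt, N / a := by
  set K := N.sqrt
  have div_le_of_lt {a : ℕ} (ha : K < a) : N / a ≤ K :=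
    Nat.le_of_lt_succ <| (Nat.div_lt_iff_lt_mul (by omega)).2 <|
      (Nat.lt_succ_sqrt N).trans_le (Nat.mul_le_mul_left _ ha)
  have le_div_of_le {b : ℕ} (hb : 0 < b) (hbK : b ≤ K) : K ≤ N / b :=
    (Nat.le_div_iff_mul_le hb).2 ((Nat.mul_le_mul_left K hbK).trans (Nat.sqrt_le N))
  have large : ∀ a ∈ Ioc K N, N / a = #{b ∈ Ioc 0 K | b * a ≤ N} := fun a ha => by
    rw [filter_Ioc_mul_le_eq_Ioc (by grind), Nat.card_Ioc,
      min_eq_right (div_le_of_lt (mem_Ioc.1 ha).1), Nat.sub_zero]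
  have small : ∀ b ∈ Ioc 0 K, #{a ∈ Ioc K N | b * a ≤ N} = N / b - K := fun b hb => by
    simp_rw [mul_comm b]
    rw [filter_Ioc_mul_le_eq_Ioc (mem_Ioc.1 hb).1, Nat.card_Ioc,
      min_eq_right (Nat.div_le_self N b)]
  have swap : ∑ a ∈ Ioc K N, #{b ∈ Ioc 0 K | b * a ≤ N} =
      ∑ b ∈ Ioc 0 K, #{a ∈ Ioc K N | b * a ≤ N} :=
    sum_card_bipartiteAbove_eq_sum_card_bipartiteBelow _
  calc ∑ a ∈ Ioc 0 N, N / a + K * K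
      = ∑ a ∈ Ioc 0 K, N / a + (∑ a ∈ Ioc K N, N / a + ∑ _b ∈ Ioc 0 K, K) := by
        rw [← sum_Ioc_consecutive _ (Nat.zero_le K) (Nat.sqrt_le_self N), sum_const,
          Nat.card_Ioc]
        simp [add_assoc]
    _ = ∑ a ∈ Ioc 0 K, N / a + ∑ b ∈ Ioc 0 K, (N / b - K + K) := by
        rw [sum_congr rfl large, swap, sum_congr rfl small, sum_add_distrib]
    _ = 2 * ∑ a ∈ Ioc 0 K, N / a := by
        rw [sum_congr rfl fun b hb =>
          Nat.sub_add_cancel (le_div_of_le (mem_Ioc.1 hb).1 (mem_Ioc.1 hb).2)]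
        ring

end Nat

lemma Real.nat_floor_real_sqrt_eq_nat_sqrt_floor {x : ℝ} (hx : 0 ≤ x) :
    ⌊√x⌋₊ = Nat.sqrt ⌊x⌋₊ := by
  rw [Nat.floor_eq_iff (sqrt_nonneg x)]
  refine ⟨nat_sqrt_le_real_sqrt.trans (sqrt_le_sqrt (Nat.floor_le hx)), ?_⟩
  rw [sqrt_lt' (by positivity)]
  exact (Nat.lt_floor_add_one x).trans_le (by exact_mod_cast Nat.lt_succ_sqrt' ⌊x⌋₊)

lemma sum_card_divisors_eq_two_mul_sum_floor_div_sub_sq {x : ℝ} (hx : 0 ≤ x) :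
    ∑ n ∈ Icc 1 ⌊x⌋₊, (n.divisors.card : ℝ) =
      2 * ∑ a ∈ Icc 1 ⌊√x⌋₊, (⌊x / a⌋₊ : ℝ) - (⌊√x⌋₊ : ℝ) ^ 2 := by
  have h := Nat.sum_Ioc_div_add_sqrt_mul_sqrt ⌊x⌋₊
  simp only [← ArithmeticFunction.sum_Ioc_sigma0_eq_sum_div,
    ArithmeticFunction.sigma_zero_apply] at h
  have Icc_one (n : ℕ) : Icc 1 n = Ioc 0 n := rfl
  simp_rw [Icc_one, Real.nat_floor_real_sqrt_eq_nat_sqrt_floor hx, Nat.floor_div_natCast,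
    eq_sub_iff_add_eq, sq]
  exact_mod_cast h

lemma Real.log_add_one_sub_log_le_inv {y : ℝ} (hy : 0 < y) : log (y + 1) - log y ≤ y⁻¹ := by
  rw [← log_div (by positivity) hy.ne']
  calc log ((y + 1) / y) ≤ (y + 1) / y - 1 := log_le_sub_one_of_pos (by positivity)
    _ = y⁻¹ := by field_simp; ring

lemma abs_harmonic_floor_sub_log_sub_eulerMascheroniConstant_le {y : ℝ} (hy : 1 ≤ y) :
    |(harmonic ⌊y⌋₊ : ℝ) - log y - eulerMascheroniConstant| ≤ (⌊y⌋₊ : ℝ)⁻¹ := by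
  set K := ⌊y⌋₊
  have hK₀ : 0 < K := Nat.floor_pos.2 hy
  have hK : (0 : ℝ) < K := by exact_mod_cast hK₀
  have lower : harmonic K - log (K + 1) < eulerMascheroniConstant :=
    eulerMascheroniSeq_lt_eulerMascheroniConstant K
  have upper : eulerMascheroniConstant < harmonic K - log K := by
    simpa [eulerMascheroniSeq', hK₀.ne'] using eulerMascheroniConstant_lt_eulerMascheroniSeq' K
  have log_floor_le : log K ≤ log y := log_le_log hK (Nat.floor_le (by linarith))
  have log_le_log_floor_add_one : log y ≤ log (K + 1) :=
    log_le_log (by linarith) (Nat.lt_floor_add_one y).le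
  have log_gap := log_add_one_sub_log_le_inv hK
  rw [abs_le]
  constructor <;> linarith

lemma abs_sum_floor_div_sub_mul_sum_inv_le {x : ℝ} (hx : 0 ≤ x) (s : Finset ℕ) :
    |∑ a ∈ s, (⌊x / a⌋₊ : ℝ) - x * ∑ a ∈ s, (a : ℝ)⁻¹| ≤ #s := by
  rw [mul_sum, ← sum_sub_distrib]
  refine (abs_sum_le_sum_abs _ _).trans ?_
  refine (sum_le_card_nsmul s _ 1 fun a _ => ?_).trans_eq (by simp)
  rw [← div_eq_mul_inv, abs_sub_comm, abs_of_nonneg (sub_nonneg.2 (Nat.floor_le (by positivity)))]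
  linarith [Nat.lt_floor_add_one (x / a)]

lemma abs_sq_sub_floor_sq_le {y : ℝ} (hy : 0 ≤ y) : |y ^ 2 - (⌊y⌋₊ : ℝ) ^ 2| ≤ 2 * y := by
  have floor_le := Nat.floor_le hy
  have lt_floor_add_one := Nat.lt_floor_add_one y
  have floor_nonneg : (0 : ℝ) ≤ ⌊y⌋₊ := Nat.cast_nonneg _
  rw [abs_le]
  constructor <;> nlinarith

theorem abs_sum_card_divisors_sub_le {x : ℝ} (hx : 1 ≤ x) :
    |∑ n ∈ Icc 1 ⌊x⌋₊, (n.divisors.card : ℝ) -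
        (x * log x + (2 * eulerMascheroniConstant - 1) * x)| ≤ 8 * √x := by
  have hD := sum_card_divisors_eq_two_mul_sum_floor_div_sub_sq (x := x) (by linarith)
  set γ := eulerMascheroniConstant
  set K := ⌊√x⌋₊
  set T := ∑ a ∈ Icc 1 K, (⌊x / a⌋₊ : ℝ)
  set H := ∑ a ∈ Icc 1 K, (a : ℝ)⁻¹
  have hsqrt : 1 ≤ √x := one_le_sqrt.2 hx
  have hsq : √x ^ 2 = x := sq_sqrt (by linarith)
  have hK : (0 : ℝ) < K := by exact_mod_cast Nat.floor_pos.2 hsqrt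
  have sqrt_lt : √x < 2 * K := by
    linarith [Nat.lt_floor_add_one √x, (Nat.one_le_cast (α := ℝ)).2 (Nat.floor_pos.2 hsqrt)]
  have floor_err : |T - x * H| ≤ √x := by
    have h := abs_sum_floor_div_sub_mul_sum_inv_le (x := x) (by linarith) (Icc 1 K)
    rw [Nat.card_Icc, Nat.add_sub_cancel] at h
    exact h.trans (Nat.floor_le (sqrt_nonneg x))
  have harmonic_err : |2 * x * (H - log √x - γ)| ≤ 4 * √x := by
    have h := abs_harmonic_floor_sub_log_sub_eulerMascheroniConstant_le hsqrt
    rw [show (harmonic K : ℝ) = H by push_cast [harmonic_eq_sum_Icc]; rfl] at h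
    rw [abs_mul, abs_of_pos (by positivity)]
    calc 2 * x * |H - log √x - γ| ≤ 2 * x * (K : ℝ)⁻¹ := by gcongr
      _ ≤ 4 * √x := by
        rw [← div_eq_mul_inv, div_le_iff₀ hK]
        nlinarith [mul_lt_mul_of_pos_left sqrt_lt (by linarith : 0 < √x)]
  have square_err := abs_sq_sub_floor_sq_le (sqrt_nonneg x)
  calc _ = |2 * (T - x * H) + 2 * x * (H - log √x - γ) + (√x ^ 2 - (K : ℝ) ^ 2)| := by
        rw [hD, log_sqrt (by linarith), hsq]
        congr 1
        ring
    _ ≤ 2 * |T - x * H| + |2 * x * (H - log √x - γ)| + |√x ^ 2 - (K : ℝ) ^ 2| :=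
        (abs_add_three _ _ _).trans_eq (by rw [abs_mul 2, abs_two])
    _ ≤ 8 * √x := by linarith

open Filter Asymptotics Real in
/-- Dirichlet's divisor estimate: `∑_{n ≤ x} d(n) = x log x + (2γ - 1) x + O(√x)`. -/
theorem dirichlet_divisor :
    (fun x : ℝ => (∑ n ∈ Finset.Icc 1 ⌊x⌋₊, ((n.divisors.card : ℝ))) -
        (x * Real.log x + (2 * Real.eulerMascheroniConstant - 1) * x)) =O[atTop]
      (fun x : ℝ => Real.sqrt x) := by
  refine IsBigO.of_bound 8 ?_
  filter_upwards [eventually_ge_atTop 1] with x hx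
  rw [norm_eq_abs, norm_of_nonneg (sqrt_nonneg x)]
  exact abs_sum_card_divisors_sub_le hx
end

section
/- Voronoi's congruence: for even n ≥ 2, write B_n = N_n/D_n in lowest terms. If a and m are positive integers with gcd(a, m) = 1, then (a^n − 1)·N_n ≡ n·a^{n−1}·D_n·Σ_{j=1}^{m−1} j^{n−1}·⌊ja/m⌋ (mod m). -/
open Finset

namespace VoronoiAux


lemma choose_key {n i : ℕ} (h : i ≤ n) :
    (n + 1 - i) * (n + 1).choose i = (n + 1) * n.choose i := by
  have h1 : (n + 1).choose i = (n + 1).choose (n + 1 - i) := by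
    rw [Nat.choose_symm (by omega)]
  obtain ⟨j, hj⟩ : ∃ j, n - i = j := ⟨_, rfl⟩
  have h2 : n + 1 - i = j + 1 := by omega
  have h3 := (Nat.add_one_mul_choose_eq n j).symm
  have h4 : n.choose j = n.choose i := by rw [← hj, Nat.choose_symm h]
  rw [h1, h2, mul_comm, h3, h4]

noncomputable def vterm (n m i : ℕ) : ℚ :=
  bernoulli i * (n.choose i : ℚ) * (m : ℚ) ^ (n + 1 - i) / ((n + 1 - i : ℕ) : ℚ)

lemma sum_pow_eq_sum_vterm (m n : ℕ) :
    (∑ k ∈ range m, (k : ℚ) ^ n) = ∑ i ∈ range (n + 1), vterm n m i := by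
  rw [sum_range_pow m n]
  refine Finset.sum_congr rfl fun i hi => ?_
  have hin : i ≤ n := by simpa [Nat.lt_succ_iff] using hi
  have hk : (0:ℚ) < ((n + 1 - i : ℕ) : ℚ) := by
    have : 0 < n + 1 - i := by omega
    exact_mod_cast this
  have hn1 : (0:ℚ) < ((n:ℚ) + 1) := by positivity
  rw [vterm, div_eq_div_iff hn1.ne' hk.ne']
  have hcast : ((n + 1 - i : ℕ) : ℚ) * ((n + 1).choose i : ℚ)
      = ((n:ℚ) + 1) * (n.choose i : ℚ) := by
    have h5 : ((n:ℚ) + 1) = ((n + 1 : ℕ) : ℚ) := by push_cast; ring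
    rw [h5]
    exact_mod_cast congrArg (Nat.cast : ℕ → ℚ) (choose_key (n := n) (i := i) hin)
  linear_combination (bernoulli i * (m:ℚ) ^ (n + 1 - i)) * hcast

lemma vterm_last (n m : ℕ) : vterm n m n = bernoulli n * m := by
  simp [vterm]


variable {p : ℕ} [hp : Fact p.Prime]

lemma le_padicValRat_sum {c : ℤ} {s : Finset ℕ} {f : ℕ → ℚ}
    (h : ∀ i ∈ s, f i ≠ 0 → c ≤ padicValRat p (f i)) (hs : ∑ i ∈ s, f i ≠ 0) :
    c ≤ padicValRat p (∑ i ∈ s, f i) := by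
  classical
  induction s using Finset.induction_on with
  | empty => simp at hs
  | insert a s ha ih =>
    rw [Finset.sum_insert ha] at hs ⊢
    by_cases h0 : ∑ i ∈ s, f i = 0
    · rw [h0, add_zero] at hs ⊢
      exact h a (Finset.mem_insert_self a s) hs
    · by_cases hfa : f a = 0
      · rw [hfa, zero_add] at hs ⊢
        exact ih (fun i hi => h i (Finset.mem_insert_of_mem hi)) h0
      · refine le_trans (le_min (h a (Finset.mem_insert_self a s) hfa)
          (ih (fun i hi => h i (Finset.mem_insert_of_mem hi)) h0))
          (padicValRat.min_le_padicValRat_add hs)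

lemma le_padicValRat_of_eq_sub {x y z : ℚ} (hx : x = y - z) (hx0 : x ≠ 0) {c : ℤ}
    (hy : y ≠ 0 → c ≤ padicValRat p y) (hz : z ≠ 0 → c ≤ padicValRat p z) :
    c ≤ padicValRat p x := by
  by_cases hz0 : z = 0
  · subst hz0; rw [sub_zero] at hx; subst hx; exact hy hx0
  by_cases hy0 : y = 0
  · subst hy0; rw [zero_sub] at hx; subst hx
    rw [padicValRat.neg]; exact hz hz0
  · subst hx
    rw [sub_eq_add_neg]
    refine le_trans (le_min (hy hy0) ?_) (padicValRat.min_le_padicValRat_add ?_)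
    · rw [padicValRat.neg]; exact hz hz0
    · rwa [← sub_eq_add_neg]

lemma padicValNat_lt_self {k : ℕ} (hk : k ≠ 0) : padicValNat p k < k := by
  have h1 : p ^ padicValNat p k ∣ k := pow_padicValNat_dvd
  have h2 : p ^ padicValNat p k ≤ k := Nat.le_of_dvd (Nat.pos_of_ne_zero hk) h1
  have h3 : padicValNat p k < 2 ^ padicValNat p k := Nat.lt_two_pow_self
  have h4 : (2:ℕ) ^ padicValNat p k ≤ p ^ padicValNat p k :=
    Nat.pow_le_pow_left hp.out.two_le _
  omega

lemma three_pow_ge (v : ℕ) (hv : 1 ≤ v) : v + 2 ≤ 3 ^ v := by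
  induction v with
  | zero => omega
  | succ w ih =>
    rcases Nat.eq_zero_or_pos w with h | h
    · subst h; norm_num
    · have := ih h
      have : 3 ^ w ≥ 1 := Nat.one_le_pow _ _ (by norm_num)
      calc w + 1 + 2 ≤ 3 ^ w + 1 := by omega
        _ ≤ 3 ^ (w + 1) := by rw [pow_succ]; omega

lemma padicValNat_add_two_le {k : ℕ} (hk : k ≠ 0) (hp3 : 3 ≤ p) (hdvd : p ∣ k) :
    padicValNat p k + 2 ≤ k := by
  set v := padicValNat p k with hv
  have hv1 : 1 ≤ v := by
    rw [hv]
    exact one_le_padicValNat_of_dvd hk hdvd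
  have h2 : p ^ v ≤ k := Nat.le_of_dvd (Nat.pos_of_ne_zero hk) pow_padicValNat_dvd
  have h3 : (3:ℕ) ^ v ≤ p ^ v := Nat.pow_le_pow_left hp3 _
  have := three_pow_ge v hv1
  omega

lemma five_pow_ge (v : ℕ) (hv : 1 ≤ v) : v + 3 ≤ 5 ^ v := by
  induction v with
  | zero => omega
  | succ w ih =>
    rcases Nat.eq_zero_or_pos w with h | h
    · subst h; norm_num
    · have := ih h
      have : 5 ^ w ≥ 1 := Nat.one_le_pow _ _ (by norm_num)
      calc w + 1 + 3 ≤ 5 ^ w + 1 := by omega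
        _ ≤ 5 ^ (w + 1) := by rw [pow_succ]; omega

lemma padicValNat_add_three_le {k : ℕ} (hk : k ≠ 0) (hp5 : 5 ≤ p) (hdvd : p ∣ k) :
    padicValNat p k + 3 ≤ k := by
  set v := padicValNat p k with hv
  have hv1 : 1 ≤ v := by
    rw [hv]
    exact one_le_padicValNat_of_dvd hk hdvd
  have h2 : p ^ v ≤ k := Nat.le_of_dvd (Nat.pos_of_ne_zero hk) pow_padicValNat_dvd
  have h3 : (5:ℕ) ^ v ≤ p ^ v := Nat.pow_le_pow_left hp5 _
  have := five_pow_ge v hv1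
  omega


lemma vterm_ne_zero_iff {n m i : ℕ} (hin : i ≤ n) (hm : m ≠ 0) :
    vterm n m i ≠ 0 ↔ bernoulli i ≠ 0 := by
  have hc : (n.choose i : ℚ) ≠ 0 := by
    exact_mod_cast (Nat.choose_pos hin).ne'
  have hmq : ((m:ℚ)) ^ (n + 1 - i) ≠ 0 := by positivity
  have hk : ((n + 1 - i : ℕ) : ℚ) ≠ 0 := by
    have : 0 < n + 1 - i := by omega
    exact_mod_cast this.ne'
  rw [vterm, div_ne_zero_iff]
  constructor
  · rintro ⟨h1, -⟩
    intro hb; apply h1; rw [hb]; ring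
  · intro hb
    exact ⟨by simp [mul_ne_zero, hb, hc, hmq], hk⟩

lemma padicValRat_vterm {n m i : ℕ} (hB : bernoulli i ≠ 0) (hin : i ≤ n) (hm : m ≠ 0) :
    padicValRat p (vterm n m i) = padicValRat p (bernoulli i)
      + (padicValNat p (n.choose i) : ℤ)
      + (n + 1 - i : ℕ) * (padicValNat p m : ℤ) - (padicValNat p (n + 1 - i) : ℤ) := by
  have hc : (n.choose i : ℚ) ≠ 0 := by exact_mod_cast (Nat.choose_pos hin).ne'
  have hmq : ((m:ℚ)) ≠ 0 := by exact_mod_cast hm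
  have hmqp : ((m:ℚ)) ^ (n + 1 - i) ≠ 0 := pow_ne_zero _ hmq
  have hk : ((n + 1 - i : ℕ) : ℚ) ≠ 0 := by
    have : 0 < n + 1 - i := by omega
    exact_mod_cast this.ne'
  rw [vterm, padicValRat.div (by exact mul_ne_zero (mul_ne_zero hB hc) hmqp) hk,
    padicValRat.mul (mul_ne_zero hB hc) hmqp, padicValRat.mul hB hc,
    padicValRat.pow _]
  rw [padicValRat.of_nat, padicValRat.of_nat, padicValRat.of_nat]

lemma faulhaber_p (n : ℕ) :
    bernoulli n * (p:ℚ) = ((∑ k ∈ range p, k ^ n : ℕ) : ℚ) - ∑ i ∈ range n, vterm n p i := by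
  have h := sum_pow_eq_sum_vterm p n
  rw [Finset.sum_range_succ, vterm_last] at h
  have hc : ((∑ k ∈ range p, k ^ n : ℕ) : ℚ) = ∑ k ∈ range p, (k : ℚ) ^ n := by push_cast; ring
  rw [hc]
  linarith [h]

lemma neg_one_le_padicValRat_bernoulli (n : ℕ) (hB : bernoulli n ≠ 0) :
    -1 ≤ padicValRat p (bernoulli n) := by
  induction n using Nat.strong_induction_on with
  | _ n ih =>
  have hp0 : ((p:ℚ)) ≠ 0 := by exact_mod_cast hp.out.ne_zero
  have hpne : (p:ℕ) ≠ 0 := hp.out.ne_zero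
  have key := faulhaber_p (p := p) n
  have hterm : ∀ i ∈ range n, vterm n p i ≠ 0 → (0:ℤ) ≤ padicValRat p (vterm n p i) := by
    intro i hi hvt
    have hin : i ≤ n := le_of_lt (mem_range.mp hi)
    have hBi : bernoulli i ≠ 0 := (vterm_ne_zero_iff hin hpne).mp hvt
    rw [padicValRat_vterm hBi hin hpne, padicValNat.self hp.out.one_lt]
    have h1 := ih i (mem_range.mp hi) hBi
    have h2 := padicValNat_lt_self (p := p) (k := n + 1 - i) (by omega)
    have h3 : (0:ℤ) ≤ (padicValNat p (n.choose i) : ℤ) := by positivity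
    have hk2 : (padicValNat p (n + 1 - i) : ℤ) < ((n + 1 - i : ℕ) : ℤ) := by exact_mod_cast h2
    omega
  have h0 : (0:ℤ) ≤ padicValRat p (bernoulli n * p) := by
    refine le_padicValRat_of_eq_sub key (mul_ne_zero hB hp0) (fun _ => ?_) (fun hs => ?_)
    · rw [padicValRat.of_nat]; positivity
    · exact le_padicValRat_sum hterm hs
  rw [padicValRat.mul hB hp0, padicValRat.self hp.out.one_lt] at h0
  omega

lemma sum_pow_p_not_dvd {n : ℕ} (hn : 2 ≤ n) (hne : Even n) (hp23 : p = 2 ∨ p = 3) :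
    ¬ p ∣ (∑ k ∈ range p, k ^ n) := by
  obtain ⟨l, hl⟩ := hne
  rcases hp23 with h2 | h3
  · subst h2
    have : (∑ k ∈ range 2, k ^ n) = 1 := by
      rw [Finset.sum_range_succ, Finset.sum_range_one]
      rw [Nat.zero_pow (by omega), Nat.one_pow]
    rw [this]; omega
  · subst h3
    have h4 : (∑ k ∈ range 3, k ^ n) = 1 + 4 ^ l := by
      rw [Finset.sum_range_succ, Finset.sum_range_succ, Finset.sum_range_one]
      rw [Nat.zero_pow (by omega), Nat.one_pow]
      have : (2:ℕ) ^ n = 4 ^ l := by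
        rw [hl, ← two_mul, pow_mul]; norm_num
      omega
    rw [h4]
    intro hdvd
    have h5 : (1 + 4 ^ l) % 3 = 2 := by
      have : 4 ^ l % 3 = 1 % 3 := by
        rw [Nat.pow_mod]; norm_num
      omega
    omega

lemma padicValRat_bernoulli_one : padicValRat p (bernoulli 1) = -(padicValNat p 2 : ℤ) := by
  rw [bernoulli_one]
  rw [show (-1/2 : ℚ) = -(1/2) by norm_num, padicValRat.neg,
    one_div, padicValRat.inv, show ((2:ℚ)) = ((2:ℕ):ℚ) by norm_num, padicValRat.of_nat]

lemma term_bound_p {n i : ℕ} (hn : 2 ≤ n) (hne : Even n) (hp23 : p = 2 ∨ p = 3)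
    (hi : i < n) (hvt : vterm n p i ≠ 0) : (1:ℤ) ≤ padicValRat p (vterm n p i) := by
  have hpne : (p:ℕ) ≠ 0 := hp.out.ne_zero
  have hin : i ≤ n := le_of_lt hi
  have hBi : bernoulli i ≠ 0 := (vterm_ne_zero_iff hin hpne).mp hvt
  rw [padicValRat_vterm hBi hin hpne, padicValNat.self hp.out.one_lt]
  rcases eq_or_ne i 1 with h1 | h1
  · subst h1
    rw [padicValRat_bernoulli_one, Nat.choose_one_right]
    have h2 : n + 1 - 1 = n := by omega
    rw [h2]
    have hv2 : (padicValNat p 2 : ℤ) ≤ 1 := by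
      rcases hp23 with h | h <;> subst h
      · simp [padicValNat.self]
      · norm_num [padicValNat.eq_zero_of_not_dvd]
    have hnn : (2:ℤ) ≤ (n:ℤ) := by exact_mod_cast hn
    omega
  · -- i ≠ 1, bernoulli i ≠ 0 → i even
    have hieven : Even i := by
      by_contra hodd
      rw [Nat.not_even_iff_odd] at hodd
      have hi1 : 1 < i := by
        rcases hodd with ⟨t, ht⟩
        omega
      exact hBi (by
        rw [bernoulli_eq_bernoulli'_of_ne_one h1]
        exact bernoulli'_eq_zero_of_odd hodd hi1)
    set k := n + 1 - i with hk
    have hkodd : Odd k := by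
      obtain ⟨u, hu⟩ := hne
      obtain ⟨v, hv⟩ := hieven
      refine ⟨u - v, by omega⟩
    have hk3 : 3 ≤ k := by
      obtain ⟨u, hu⟩ := hne
      obtain ⟨v, hv⟩ := hieven
      omega
    have hvb := neg_one_le_padicValRat_bernoulli (p := p) i hBi
    have hvc : (0:ℤ) ≤ (padicValNat p (n.choose i) : ℤ) := by positivity
    have hk0 : k ≠ 0 := by omega
    have hkb : (padicValNat p k : ℤ) + 2 ≤ (k:ℤ) := by
      rcases hp23 with h | h
      · subst h
        have hnd : ¬ (2 ∣ k) := by rcases hkodd with ⟨t, ht⟩; omega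
        rw [padicValNat.eq_zero_of_not_dvd hnd]
        have : (3:ℤ) ≤ (k:ℤ) := by exact_mod_cast hk3
        omega
      · subst h
        by_cases hd : 3 ∣ k
        · exact_mod_cast padicValNat_add_two_le hk0 le_rfl hd
        · rw [padicValNat.eq_zero_of_not_dvd hd]
          have : (3:ℤ) ≤ (k:ℤ) := by exact_mod_cast hk3
          omega
    omega

lemma padicValRat_bernoulli_eq_neg_one {n : ℕ} (hn : 2 ≤ n) (hne : Even n)
    (hp23 : p = 2 ∨ p = 3) : bernoulli n ≠ 0 ∧ padicValRat p (bernoulli n) = -1 := by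
  have hp0 : ((p:ℚ)) ≠ 0 := by exact_mod_cast hp.out.ne_zero
  have hnd := sum_pow_p_not_dvd (p := p) hn hne hp23
  set c : ℕ := ∑ k ∈ range p, k ^ n with hc
  have hcne : ((c:ℚ)) ≠ 0 := by
    intro h
    exact hnd (by rw [show c = 0 by exact_mod_cast h]; exact Dvd.intro 0 rfl)
  have hvc : padicValRat p ((c:ℚ)) = 0 := by
    rw [padicValRat.of_nat]
    exact_mod_cast padicValNat.eq_zero_of_not_dvd hnd
  have key := faulhaber_p (p := p) n
  rw [← hc] at key
  set S := ∑ i ∈ range n, vterm n p i with hS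
  have hSbound : S ≠ 0 → (1:ℤ) ≤ padicValRat p S :=
    fun hS0 => le_padicValRat_sum
      (fun i hi hvt => term_bound_p hn hne hp23 (mem_range.mp hi) hvt) hS0
  have hBne : bernoulli n ≠ 0 := by
    intro hB0
    rw [hB0, zero_mul] at key
    by_cases hS0 : S = 0
    · rw [hS0, sub_zero] at key; exact hcne key.symm
    · have h1 := hSbound hS0
      have : ((c:ℚ)) = S := by linarith [key]
      rw [← this, hvc] at h1
      omega
  have hBp : bernoulli n * (p:ℚ) ≠ 0 := mul_ne_zero hBne hp0
  have hv0 : padicValRat p (bernoulli n * (p:ℚ)) = 0 := by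
    by_cases hS0 : S = 0
    · rw [key, hS0, sub_zero, hvc]
    · have h1 := hSbound hS0
      have hkey2 : bernoulli n * (p:ℚ) = (c:ℚ) + (-S) := by rw [key]; ring
      rw [hkey2, padicValRat.add_eq_of_lt (by rw [← hkey2]; exact hBp) hcne
        (neg_ne_zero.mpr hS0) (by rw [padicValRat.neg, hvc]; omega), hvc]
  rw [padicValRat.mul hBne hp0, padicValRat.self hp.out.one_lt] at hv0
  exact ⟨hBne, by omega⟩

lemma dvd_den {n : ℕ} (hn : 2 ≤ n) (hne : Even n) (hp23 : p = 2 ∨ p = 3) :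
    p ∣ (bernoulli n).den := by
  obtain ⟨hBne, hv⟩ := padicValRat_bernoulli_eq_neg_one (p := p) hn hne hp23
  by_contra hnd
  rw [padicValRat_def p (bernoulli n), padicValNat.eq_zero_of_not_dvd hnd] at hv
  simp only [Nat.cast_zero, sub_zero] at hv
  have : (0:ℤ) ≤ (padicValInt p (bernoulli n).num : ℤ) := by positivity
  omega


lemma term_bound {n m i : ℕ} (hn : 2 ≤ n) (hne : Even n) (hm : m ≠ 0) (hi : i < n)
    (hpm : p ∣ m) (ht : vterm n m i ≠ 0) :
    2 * (padicValNat p m : ℤ) ≤ padicValRat p (((bernoulli n).den : ℚ) * vterm n m i) := by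
  have hin : i ≤ n := le_of_lt hi
  have hBi : bernoulli i ≠ 0 := (vterm_ne_zero_iff hin hm).mp ht
  have hD : ((bernoulli n).den : ℚ) ≠ 0 := by
    exact_mod_cast (bernoulli n).den_nz
  have hE1 : 1 ≤ padicValNat p m := one_le_padicValNat_of_dvd hm hpm
  have hE1' : (1:ℤ) ≤ (padicValNat p m:ℤ) := by exact_mod_cast hE1
  rw [padicValRat.mul hD ht, padicValRat.of_nat, padicValRat_vterm hBi hin hm]
  have hvD : (0:ℤ) ≤ (padicValNat p (bernoulli n).den : ℤ) := by positivity
  have hvc : (0:ℤ) ≤ (padicValNat p (n.choose i) : ℤ) := by positivity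
  rcases eq_or_ne i 1 with h1 | h1
  · subst h1
    rw [padicValRat_bernoulli_one, Nat.choose_one_right, show n + 1 - 1 = n from by omega]
    have hne2 : 2 * (padicValNat p m:ℤ) ≤ (n:ℤ) * (padicValNat p m:ℤ) := by
      have : 2 * padicValNat p m ≤ n * padicValNat p m := Nat.mul_le_mul_right _ hn
      exact_mod_cast this
    have hv2 : (padicValNat p 2 : ℤ) ≤ (padicValNat p (bernoulli n).den : ℤ) := by
      by_cases hp2 : p = 2
      · have hd2 : p ∣ (bernoulli n).den := dvd_den hn hne (Or.inl hp2)
        have h2 : 1 ≤ padicValNat p (bernoulli n).den :=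
          one_le_padicValNat_of_dvd (bernoulli n).den_nz hd2
        have h3 : padicValNat p 2 ≤ 1 := by
          subst hp2; simp [padicValNat.self]
        omega
      · rw [padicValNat.eq_zero_of_not_dvd (by
          intro h; exact hp2 ((Nat.prime_dvd_prime_iff_eq hp.out Nat.prime_two).mp h))]
        exact hvD
    linarith
  · have hieven : Even i := by
      by_contra hodd
      rw [Nat.not_even_iff_odd] at hodd
      have hi1 : 1 < i := by rcases hodd with ⟨t, ht'⟩; omega
      exact hBi (by
        rw [bernoulli_eq_bernoulli'_of_ne_one h1]
        exact bernoulli'_eq_zero_of_odd hodd hi1)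
    set k := n + 1 - i with hk
    have hkodd : Odd k := by
      obtain ⟨u, hu⟩ := hne
      obtain ⟨v, hv⟩ := hieven
      exact ⟨u - v, by omega⟩
    have hk3 : 3 ≤ k := by
      obtain ⟨u, hu⟩ := hne
      obtain ⟨v, hv⟩ := hieven
      omega
    have hk0 : k ≠ 0 := by omega
    have hK3 : (3:ℤ) ≤ (k:ℤ) := by exact_mod_cast hk3
    have hvb := neg_one_le_padicValRat_bernoulli (p := p) i hBi
    by_cases hpk : p ∣ k
    · have hpodd : p ≠ 2 := by
        intro h2; subst h2
        rcases hkodd with ⟨t, ht'⟩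
        omega
      have hke : 3 * ((padicValNat p m:ℤ) - 1) ≤ (k:ℤ) * ((padicValNat p m:ℤ) - 1) :=
        mul_le_mul_of_nonneg_right hK3 (by omega)
      by_cases hp3 : p = 3
      · have hd3 : p ∣ (bernoulli n).den := dvd_den hn hne (Or.inr hp3)
        have hD1 : (1:ℤ) ≤ (padicValNat p (bernoulli n).den : ℤ) := by
          exact_mod_cast one_le_padicValNat_of_dvd
            (bernoulli n).den_nz hd3
        have hvk : (padicValNat p k : ℤ) + 2 ≤ (k:ℤ) := by
          exact_mod_cast padicValNat_add_two_le hk0 (by omega) hpk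
        linarith
      · have hp5 : 5 ≤ p := by
          rcases Nat.lt_or_ge p 5 with h | h
          · have h2 := hp.out.two_le
            have h4 : p = 2 ∨ p = 3 ∨ p = 4 := by omega
            rcases h4 with h' | h' | h'
            · exact absurd h' hpodd
            · exact absurd h' hp3
            · rw [h'] at hp
              exact absurd hp.out (by norm_num)
          · exact h
        have hvk : (padicValNat p k : ℤ) + 3 ≤ (k:ℤ) := by
          exact_mod_cast padicValNat_add_three_le hk0 hp5 hpk
        linarith
    · rw [padicValNat.eq_zero_of_not_dvd hpk]
      have hke : 3 * (padicValNat p m:ℤ) ≤ (k:ℤ) * (padicValNat p m:ℤ) :=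
        mul_le_mul_of_nonneg_right hK3 (by omega)
      simp only [Nat.cast_zero]
      linarith


lemma voronoi_L2 {n m : ℕ} (hn : 2 ≤ n) (hne : Even n) (hm : 0 < m) :
    ((m : ℤ)) ^ 2 ∣ ((bernoulli n).den : ℤ) * (∑ j ∈ range m, (j : ℤ) ^ n)
      - (bernoulli n).num * m := by
  set X : ℤ := ((bernoulli n).den : ℤ) * (∑ j ∈ range m, (j : ℤ) ^ n)
      - (bernoulli n).num * m with hX
  have hDB : ((bernoulli n).den : ℚ) * bernoulli n = ((bernoulli n).num : ℚ) := by
    rw [mul_comm]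
    exact_mod_cast Rat.mul_den_eq_num (bernoulli n)
  have hXQ : (X:ℚ) = ∑ i ∈ range n, ((bernoulli n).den : ℚ) * vterm n m i := by
    have h1 : ((∑ j ∈ range m, (j : ℤ) ^ n : ℤ) : ℚ) = ∑ k ∈ range m, (k : ℚ) ^ n := by
      push_cast; ring
    have h2 := sum_pow_eq_sum_vterm m n
    rw [Finset.sum_range_succ, vterm_last] at h2
    rw [hX]
    push_cast
    rw [show (∑ j ∈ range m, ((j : ℚ)) ^ n) = (∑ i ∈ range n, vterm n m i) + bernoulli n * m
      from h2, mul_add, ← mul_assoc, hDB, Finset.mul_sum]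
    ring
  by_cases hX0 : X = 0
  · rw [hX0]; exact dvd_zero _
  have hm2 : ((m:ℤ))^2 = ((m^2 : ℕ) : ℤ) := by push_cast; ring
  rw [hm2, Int.natCast_dvd]
  rw [← Nat.factorization_le_iff_dvd (by positivity) (Int.natAbs_ne_zero.mpr hX0)]
  intro p
  by_cases hpp : p.Prime
  swap
  · simp [Nat.factorization_eq_zero_of_not_prime _ hpp]
  by_cases hpm : p ∣ m
  swap
  · rw [Nat.factorization_pow]
    simp [Nat.factorization_eq_zero_of_not_dvd hpm]
  haveI : Fact p.Prime := ⟨hpp⟩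
  have key : (2 * (padicValNat p m : ℤ)) ≤ padicValRat p ((X:ℚ)) := by
    rw [hXQ]
    refine le_padicValRat_sum (fun i hi ht => ?_) (by rw [← hXQ]; exact_mod_cast hX0)
    have hvt : vterm n m i ≠ 0 := fun h => ht (by rw [h, mul_zero])
    exact term_bound hn hne hm.ne' (mem_range.mp hi) hpm hvt
  have hconv : padicValRat p ((X:ℚ)) = (padicValNat p X.natAbs : ℤ) := by
    rw [padicValRat.of_int]
    rfl
  rw [hconv] at key
  rw [Nat.factorization_pow, Finsupp.smul_apply, Nat.factorization_def _ hpp,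
    Nat.factorization_def _ hpp]
  have : 2 * padicValNat p m ≤ padicValNat p X.natAbs := by exact_mod_cast key
  simpa using this


end VoronoiAux

open VoronoiAux


lemma sq_dvd_binom_aux (x y : ℤ) (n : ℕ) (hn : 1 ≤ n) :
    x ^ 2 ∣ (x + y) ^ n - (y ^ n + n * x * y ^ (n - 1)) := by
  obtain ⟨n', rfl⟩ : ∃ n', n = n' + 1 := ⟨n - 1, by omega⟩
  have key : (x + y) ^ (n' + 1) - (y ^ (n' + 1) + (↑(n' + 1) : ℤ) * x * y ^ (n' + 1 - 1))
      = ∑ i ∈ range n', x ^ (i + 1 + 1) * y ^ (n' - (i + 1)) * ((n' + 1).choose (i + 1 + 1)) := by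
    rw [add_pow, Finset.sum_range_succ', Finset.sum_range_succ']
    have hc1 : (n' + 1).choose 1 = n' + 1 := Nat.choose_one_right _
    simp only [pow_zero, one_mul, Nat.choose_zero_right, Nat.cast_one, mul_one, pow_one,
      hc1, Nat.add_sub_cancel]
    push_cast
    ring
  rw [key]
  refine Finset.dvd_sum fun i _ => ?_
  exact Dvd.dvd.mul_right (Dvd.dvd.mul_right ⟨x ^ i, by ring⟩ _) _

lemma voronoi_L1 {n a m : ℕ} (hn : 2 ≤ n) (ha : 0 < a) (hm : 0 < m)
    (hcop : Nat.Coprime a m) :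
    ((m : ℤ)) ^ 2 ∣ (((a : ℤ) ^ n - 1) * ∑ j ∈ Finset.Ico 1 m, (j : ℤ) ^ n)
      - (n : ℤ) * (a : ℤ) ^ (n - 1) * m *
          ∑ j ∈ Finset.Ico 1 m, (j : ℤ) ^ (n - 1) * ((j * a / m : ℕ) : ℤ) := by
  have hterm : ∀ j ∈ Finset.Ico 1 m, ((m:ℤ))^2 ∣
      ((j:ℤ))^n * (a:ℤ)^n - ((j * a % m : ℕ) : ℤ)^n
        - (n:ℤ) * m * ((j * a / m : ℕ) : ℤ) * (j:ℤ)^(n-1) * (a:ℤ)^(n-1) := by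
    intro j hj
    have hqr' : ((j * a : ℕ):ℤ) = (m:ℤ) * ((j * a / m : ℕ) : ℤ) + ((j * a % m : ℕ) : ℤ) := by
      exact_mod_cast (Nat.div_add_mod (j * a) m).symm
    set q : ℤ := ((j * a / m : ℕ) : ℤ)
    set r : ℤ := ((j * a % m : ℕ) : ℤ)
    have hqr : (j:ℤ) * a = m * q + r := by push_cast at hqr'; exact hqr'
    have step1 : ((m:ℤ))^2 ∣ ((j:ℤ) * a)^n - (r^n + n * ((m:ℤ) * q) * r^(n-1)) := by
      rw [hqr]
      exact dvd_trans ⟨q^2, by ring⟩ (sq_dvd_binom_aux ((m:ℤ) * q) r n (by omega))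
    have hr : r ≡ (j:ℤ) * a [ZMOD (m:ℤ)] := by
      have : ((j * a % m : ℕ) : ℤ) ≡ ((j * a : ℕ) : ℤ) [ZMOD ((m:ℕ):ℤ)] :=
        Int.natCast_modEq_iff.mpr (Nat.mod_modEq (j * a) m)
      simpa [r] using this
    have step2 : ((m:ℤ))^2 ∣ ((n:ℤ) * ((m:ℤ) * q) * r^(n-1)
        - (n:ℤ) * m * q * (j:ℤ)^(n-1) * (a:ℤ)^(n-1)) := by
      have h1 : (m:ℤ) ∣ ((j:ℤ) * a)^(n-1) - r^(n-1) := (hr.pow (n-1)).dvd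
      obtain ⟨c, hc⟩ := h1
      refine ⟨-((n:ℤ) * q * c), ?_⟩
      linear_combination (-(n:ℤ) * m * q) * hc
    have hstep2' : ((n:ℤ) * (a:ℤ)^n - 0) = 0 ∨ True := Or.inr trivial
    have hcomb := dvd_add step1 step2
    convert hcomb using 1
    · rfl
    ring
  have hsum := Finset.dvd_sum hterm
  -- the permutation j ↦ j*a % m of Ico 1 m
  have hperm : ∑ j ∈ Finset.Ico 1 m, ((j * a % m : ℕ) : ℤ)^n
      = ∑ j ∈ Finset.Ico 1 m, ((j:ℤ))^n := by
    have hmaps : ∀ j ∈ Finset.Ico 1 m, j * a % m ∈ Finset.Ico 1 m := by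
      intro j hj
      rw [Finset.mem_Ico] at hj ⊢
      refine ⟨?_, Nat.mod_lt _ hm⟩
      rcases Nat.eq_zero_or_pos (j * a % m) with h0 | h1
      · exfalso
        have hdvd : m ∣ j * a := Nat.dvd_of_mod_eq_zero h0
        have hdj : m ∣ j := (Nat.Coprime.dvd_of_dvd_mul_right hcop.symm) hdvd
        have := Nat.le_of_dvd (by omega) hdj
        omega
      · exact h1
    have hinj : Set.InjOn (fun j => j * a % m) (Finset.Ico 1 m) := by
      intro j hj j' hj' h
      simp only [Finset.coe_Ico, Set.mem_Ico] at hj hj'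
      have hmod : j ≡ j' [MOD m] := by
        have h1 : j * a ≡ j' * a [MOD m] := h
        exact Nat.ModEq.cancel_right_of_coprime (by rwa [Nat.coprime_comm] at hcop) h1
      have := hmod
      unfold Nat.ModEq at this
      rwa [Nat.mod_eq_of_lt hj.2, Nat.mod_eq_of_lt hj'.2] at this
    have himage : (Finset.Ico 1 m).image (fun j => j * a % m) = Finset.Ico 1 m := by
      apply Finset.eq_of_subset_of_card_le
      · intro x hx
        rw [Finset.mem_image] at hx
        obtain ⟨j, hj, rfl⟩ := hx
        exact hmaps j hj
      · rw [Finset.card_image_of_injOn hinj]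
    conv_rhs => rw [← himage]
    rw [Finset.sum_image (fun x hx y hy h => hinj hx hy h)]
  have e2 : ∑ j ∈ Finset.Ico 1 m, ((n:ℤ) * m * ((j * a / m : ℕ) : ℤ) * (j:ℤ)^(n-1) * (a:ℤ)^(n-1))
      = (n:ℤ) * (a:ℤ)^(n-1) * m * ∑ j ∈ Finset.Ico 1 m, (j:ℤ)^(n-1) * ((j * a / m : ℕ) : ℤ) := by
    rw [Finset.mul_sum]
    exact Finset.sum_congr rfl (fun j _ => by ring)
  have key : (((a : ℤ) ^ n - 1) * ∑ j ∈ Finset.Ico 1 m, (j : ℤ) ^ n)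
      - (n : ℤ) * (a : ℤ) ^ (n - 1) * m *
          ∑ j ∈ Finset.Ico 1 m, (j : ℤ) ^ (n - 1) * ((j * a / m : ℕ) : ℤ)
      = ∑ j ∈ Finset.Ico 1 m, (((j:ℤ))^n * (a:ℤ)^n - ((j * a % m : ℕ) : ℤ)^n
        - (n:ℤ) * m * ((j * a / m : ℕ) : ℤ) * (j:ℤ)^(n-1) * (a:ℤ)^(n-1)) := by
    rw [Finset.sum_sub_distrib, Finset.sum_sub_distrib, ← Finset.sum_mul, hperm, e2]
    ring
  rw [key]
  exact hsum



/-- Voronoi's congruence: for even `n ≥ 2`, writing `B_n = N/D` in lowest terms, for positive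
coprime integers `a, m`:
`(aⁿ - 1)·N ≡ n·a^{n-1}·D·∑_{j=1}^{m-1} j^{n-1}·⌊ja/m⌋ (mod m)`. -/
theorem voronoi_congruence (n a m : ℕ) (hn : 2 ≤ n) (hne : Even n)
    (ha : 0 < a) (hm : 0 < m) (hcop : Nat.Coprime a m) :
    ((a : ℤ) ^ n - 1) * (bernoulli n).num ≡
      (n : ℤ) * (a : ℤ) ^ (n - 1) * ((bernoulli n).den : ℤ) *
        ∑ j ∈ Finset.Ico 1 m, (j : ℤ) ^ (n - 1) * ⌊(j * a : ℚ) / m⌋ [ZMOD m] := by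
  have hfloor : ∀ j : ℕ, ⌊((j:ℚ) * a) / m⌋ = ((j * a / m : ℕ) : ℤ) := by
    intro j
    have h1 : ((j:ℚ) * a) = (((j * a : ℕ) : ℤ) : ℚ) := by push_cast; ring
    rw [h1, Rat.floor_intCast_div_natCast]
    exact_mod_cast (Int.natCast_div (j * a) m).symm
  have hsum_eq : ∑ j ∈ Finset.Ico 1 m, (j : ℤ) ^ (n - 1) * ⌊(j * a : ℚ) / m⌋
      = ∑ j ∈ Finset.Ico 1 m, (j : ℤ) ^ (n - 1) * ((j * a / m : ℕ) : ℤ) :=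
    Finset.sum_congr rfl fun j _ => by rw [hfloor j]
  rw [hsum_eq]
  -- range sum = Ico sum
  have hS : (∑ j ∈ range m, (j : ℤ) ^ n) = ∑ j ∈ Finset.Ico 1 m, (j : ℤ) ^ n := by
    rw [Finset.range_eq_Ico, Finset.sum_eq_sum_Ico_succ_bot hm]
    rw [show ((0:ℕ):ℤ) = 0 by norm_num, zero_pow (by omega), zero_add]
  have c2 := voronoi_L2 (m := m) hn hne hm
  rw [hS] at c2
  have c1 := voronoi_L1 (n := n) (a := a) (m := m) hn ha hm hcop
  set S := ∑ j ∈ Finset.Ico 1 m, (j : ℤ) ^ n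
  set T := ∑ j ∈ Finset.Ico 1 m, (j : ℤ) ^ (n - 1) * ((j * a / m : ℕ) : ℤ)
  set D : ℤ := ((bernoulli n).den : ℤ)
  set N : ℤ := (bernoulli n).num
  set A : ℤ := (a : ℤ) ^ n - 1
  have h3 : ((m:ℤ))^2 ∣ A * (D * S - N * m) := Dvd.dvd.mul_left c2 A
  have h4 : ((m:ℤ))^2 ∣ D * (A * S - (n : ℤ) * (a : ℤ) ^ (n - 1) * m * T) :=
    Dvd.dvd.mul_left c1 D
  have h5 : ((m:ℤ))^2 ∣ (m:ℤ) * (A * N - (n : ℤ) * (a : ℤ) ^ (n - 1) * D * T) := by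
    have := dvd_sub h4 h3
    convert this using 1
    · rfl
    ring
  have h6 : (m:ℤ) ∣ (A * N - (n : ℤ) * (a : ℤ) ^ (n - 1) * D * T) := by
    have hm0 : (m:ℤ) ≠ 0 := by exact_mod_cast hm.ne'
    rw [pow_two] at h5
    exact (mul_dvd_mul_iff_left hm0).mp h5
  exact (Int.ModEq.symm (Int.modEq_iff_dvd.mpr h6))
end

section
/- Kummer-style corollary of Voronoi's work: for an even integer n and a prime p with (p−1) ∤ n and p ∤ n, the p-adic valuation of B_n/n is nonnegative, i.e., p does not divide the denominator of B_n/n. -/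
/-!
By von Staudt–Clausen, `B_{2k} + ∑ 1/q` is an integer, the sum running over the primes `q` with
`(q - 1) ∣ 2k`. Hence the denominator of `B_{2k}` divides the product of those primes, and `p` is
not among them. Dividing by `n` keeps `p` out of the denominator as `p ∤ n`, and a rational whose
denominator is prime to `p` has nonnegative `p`-adic valuation.
-/

open Finset

theorem padicValRat_nonneg_of_not_dvd_den {p : ℕ} {x : ℚ} (h : ¬ p ∣ x.den) :
    0 ≤ padicValRat p x := by
  simp [padicValRat_def, padicValNat.eq_zero_of_not_dvd h]

theorem Rat.not_dvd_den_div_natCast {p n : ℕ} (hp : p.Prime) {x : ℚ} (hx : ¬ p ∣ x.den)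
    (hn : ¬ p ∣ n) : ¬ p ∣ (x / n).den := by
  have hn0 : n ≠ 0 := by rintro rfl; exact hn (dvd_zero p)
  have hden : (x / n).den ∣ x.den * n := by
    simpa [div_eq_mul_inv, Rat.inv_natCast_den, hn0] using Rat.mul_den_dvd x (n : ℚ)⁻¹
  intro h
  rcases hp.dvd_mul.1 (h.trans hden) with h | h
  exacts [hx h, hn h]

theorem bernoulli_two_mul_den_dvd_prod (k : ℕ) :
    (bernoulli (2 * k)).den ∣
      ∏ q ∈ range (2 * k + 2) with q.Prime ∧ (q - 1) ∣ 2 * k, q := by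
  obtain ⟨z, hz⟩ := Bernoulli.vonStaudt_clausen k
  rw [eq_sub_of_add_eq hz.symm, Rat.intCast_sub_den]
  refine (Rat.den_sum_dvd_prod_den _ _).trans (dvd_of_eq (prod_congr rfl fun q hq ↦ ?_))
  have hq0 : q ≠ 0 := (mem_filter.1 hq).2.1.ne_zero
  simp [hq0]

theorem Nat.Prime.not_dvd_den_bernoulli_two_mul {p k : ℕ} (hp : p.Prime) (h : ¬ (p - 1) ∣ 2 * k) :
    ¬ p ∣ (bernoulli (2 * k)).den := by
  intro hdvd
  obtain ⟨q, hq, hpq⟩ :=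
    (Prime.dvd_finsetProd_iff hp.prime _).1 (hdvd.trans (bernoulli_two_mul_den_dvd_prod k))
  obtain ⟨-, hq, hq1⟩ := mem_filter.1 hq
  rw [(Nat.prime_dvd_prime_iff_eq hp hq).1 hpq] at h
  exact h hq1

/-- Kummer-style corollary: for even `n` and a prime `p` with `(p-1) ∤ n` and `p ∤ n`,
the `p`-adic valuation of `B_n / n` is nonnegative. -/
theorem voronoi_kummer (n p : ℕ) (hne : Even n) (hp : p.Prime)
    (h1 : ¬ (p - 1) ∣ n) (h2 : ¬ p ∣ n) :
    0 ≤ padicValRat p (bernoulli n / n) := by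
  obtain ⟨k, rfl⟩ := hne.two_dvd
  exact padicValRat_nonneg_of_not_dvd_den
    (Rat.not_dvd_den_div_natCast hp (hp.not_dvd_den_bernoulli_two_mul h1) h2)
end
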